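/- Let α₁ > 0, α₂ > 0, β² < 4α₁α₂, c₁, c₂, d real with d ≥ 0, and h, k, δt > 0, 1/2 ≤ ι ≤ 1. Define for θx, θy ∈ [0, 2π): F_R as in the compact scheme symbol, F_I = c₁·3 sin θx/(h(2+cos θx)) + c₂·3 sin θy/(k(2+cos θy)), and G = (1 − (1−ι)δt(F_R + d + iF_I))/(1 + ιδt(F_R + d + iF_I)). Then |G| ≤ 1 for all θx, θy, i.e., the (9,9) compact scheme with constant coefficients is unconditionally von Neumann stable. -/

import Mathlib

noncomputable def FR (α₁ α₂ β h k θx θy : ℝ) : ℝ :=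
  (α₁ / h ^ 2) * (4 * (1 - Real.cos θx) - 3 * Real.sin θx ^ 2 / (2 + Real.cos θx)) +
  (α₂ / k ^ 2) * (4 * (1 - Real.cos θy) - 3 * Real.sin θy ^ 2 / (2 + Real.cos θy)) +
  (β / (h * k)) * Real.sin θx * Real.sin θy *
    (3 / (2 + Real.cos θx) + 3 / (2 + Real.cos θy) - 1)

noncomputable def FI (c₁ c₂ h k θx θy : ℝ) : ℝ :=
  c₁ * (3 * Real.sin θx / (h * (2 + Real.cos θx))) +
  c₂ * (3 * Real.sin θy / (k * (2 + Real.cos θy)))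

/-!
Write `F_R = a₁ P(θx) + a₂ P(θy) + b W(θx, θy)` with `a₁ = α₁/h²`, `a₂ = α₂/k²`, `b = β/(hk)`.
Here `P(θ) = (1 - cos θ)(5 + cos θ)/(2 + cos θ) ≥ 0`, and `W² ≤ P(θx) P(θy)` reduces to a polynomial
inequality in `cos θx, cos θy ∈ [-1, 1]`; with `b² ≤ 4 a₁ a₂` it gives
`|b W| ≤ 2 √(a₁ a₂ P(θx) P(θy)) ≤ a₁ P(θx) + a₂ P(θy)`, hence `F_R + d ≥ 0`. For `z` with `Re z ≥ 0`,
`|1 + ι δt z|² - |1 - (1 - ι) δt z|² = 2 δt Re z + (2ι - 1) δt² |z|² ≥ 0` once `ι ≥ 1/2`.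
-/

open Real

lemma quadratic_form_nonneg {a c b x y w : ℝ} (ha : 0 ≤ a) (hc : 0 ≤ c) (hb : b ^ 2 ≤ 4 * a * c)
    (hx : 0 ≤ x) (hy : 0 ≤ y) (hw : w ^ 2 ≤ x * y) : 0 ≤ a * x + c * y + b * w := by
  have hdiag : 0 ≤ a * x + c * y := by positivity
  have hsq : (b * w) ^ 2 ≤ (a * x + c * y) ^ 2 :=
    calc (b * w) ^ 2 = b ^ 2 * w ^ 2 := by ring
      _ ≤ 4 * a * c * (x * y) := mul_le_mul hb hw (sq_nonneg w) (by positivity)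
      _ ≤ (a * x + c * y) ^ 2 := by nlinarith [sq_nonneg (a * x - c * y)]
  linarith [(abs_le_of_sq_le_sq' hsq hdiag).1]

noncomputable def compactDiag (θ : ℝ) : ℝ := 4 * (1 - cos θ) - 3 * sin θ ^ 2 / (2 + cos θ)

noncomputable def compactMixed (θx θy : ℝ) : ℝ :=
  sin θx * sin θy * (3 / (2 + cos θx) + 3 / (2 + cos θy) - 1)

lemma FR_eq (α₁ α₂ β h k θx θy : ℝ) :
    FR α₁ α₂ β h k θx θy = α₁ / h ^ 2 * compactDiag θx + α₂ / k ^ 2 * compactDiag θy +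
      β / (h * k) * compactMixed θx θy := by
  unfold FR compactDiag compactMixed
  ring

lemma two_add_cos_pos (θ : ℝ) : 0 < 2 + cos θ := by linarith [neg_one_le_cos θ]

lemma compactDiag_eq (θ : ℝ) :
    compactDiag θ = (1 - cos θ) * (5 + cos θ) / (2 + cos θ) := by
  have := two_add_cos_pos θ
  rw [compactDiag, sin_sq]
  field_simp
  ring

lemma compactDiag_nonneg (θ : ℝ) : 0 ≤ compactDiag θ := by
  rw [compactDiag_eq]
  have := cos_le_one θ
  have := neg_one_le_cos θ
  exact div_nonneg (by nlinarith) (two_add_cos_pos θ).le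

lemma compact_poly_nonneg {a b : ℝ} (ha : 0 ≤ a) (ha2 : a ≤ 2) (hb : 0 ≤ b) (hb2 : b ≤ 2) :
    0 ≤ 108 - 45 * a - 45 * b + 15 * a * b + 2 * a ^ 2 * b + 2 * a * b ^ 2 - a ^ 2 * b ^ 2 := by
  nlinarith [mul_nonneg ha hb, mul_nonneg (sub_nonneg.2 ha2) (sub_nonneg.2 hb2),
    mul_nonneg (mul_nonneg ha hb) (sub_nonneg.2 ha2),
    mul_nonneg (mul_nonneg ha hb) (sub_nonneg.2 hb2),
    mul_nonneg (mul_nonneg ha (sub_nonneg.2 ha2)) (mul_nonneg hb (sub_nonneg.2 hb2)),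
    sq_nonneg (a - b), sq_nonneg (a * b - 4)]

lemma mixed_poly_le {c c' : ℝ} (hc : -1 ≤ c) (hc1 : c ≤ 1) (hc' : -1 ≤ c') (hc'1 : c' ≤ 1) :
    (1 + c) * (1 + c') * (3 * (2 + c) + 3 * (2 + c') - (2 + c) * (2 + c')) ^ 2 ≤
      (2 + c) * (2 + c') * (5 + c) * (5 + c') := by
  have hK := compact_poly_nonneg (a := 1 - c) (b := 1 - c') (by linarith) (by linarith)
    (by linarith) (by linarith)
  have hab : 0 ≤ (1 - c) * (1 - c') := mul_nonneg (by linarith) (by linarith)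
  -- right side minus left side is `18 (c - c')² + (1 - c)(1 - c') · hK`'s polynomial
  nlinarith [sq_nonneg (c - c'), mul_nonneg hab hK]

lemma compactMixed_sq_le (θx θy : ℝ) :
    compactMixed θx θy ^ 2 ≤ compactDiag θx * compactDiag θy := by
  have hu := two_add_cos_pos θx
  have hv := two_add_cos_pos θy
  have hpoly := mul_le_mul_of_nonneg_left
    (mixed_poly_le (neg_one_le_cos θx) (cos_le_one θx) (neg_one_le_cos θy) (cos_le_one θy))
    (mul_nonneg (sub_nonneg.2 (cos_le_one θx)) (sub_nonneg.2 (cos_le_one θy)))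
  calc compactMixed θx θy ^ 2
      = (1 - cos θx) * (1 - cos θy) * ((1 + cos θx) * (1 + cos θy) *
          (3 * (2 + cos θx) + 3 * (2 + cos θy) - (2 + cos θx) * (2 + cos θy)) ^ 2) /
          ((2 + cos θx) * (2 + cos θy)) ^ 2 := by
        rw [compactMixed, mul_pow, mul_pow, sin_sq, sin_sq]
        field_simp
        ring
    _ ≤ (1 - cos θx) * (1 - cos θy) * ((2 + cos θx) * (2 + cos θy) * (5 + cos θx) *
          (5 + cos θy)) / ((2 + cos θx) * (2 + cos θy)) ^ 2 := by gcongr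
    _ = compactDiag θx * compactDiag θy := by
        rw [compactDiag_eq, compactDiag_eq]
        field_simp

lemma FR_nonneg {α₁ α₂ β : ℝ} (h1 : 0 ≤ α₁) (h2 : 0 ≤ α₂) (h3 : β ^ 2 ≤ 4 * α₁ * α₂)
    (h k θx θy : ℝ) : 0 ≤ FR α₁ α₂ β h k θx θy := by
  rw [FR_eq]
  refine quadratic_form_nonneg (by positivity) (by positivity) ?_ (compactDiag_nonneg θx)
    (compactDiag_nonneg θy) (compactMixed_sq_le θx θy)
  calc (β / (h * k)) ^ 2 = β ^ 2 / (h * k) ^ 2 := div_pow _ _ _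
    _ ≤ 4 * α₁ * α₂ / (h * k) ^ 2 := by gcongr
    _ = 4 * (α₁ / h ^ 2) * (α₂ / k ^ 2) := by rw [mul_pow]; ring

lemma norm_theta_scheme_factor_le_one {δt ι : ℝ} (hδt : 0 ≤ δt) (hι : 1 / 2 ≤ ι) {z : ℂ}
    (hz : 0 ≤ z.re) :
    ‖(1 - (((1 - ι) * δt : ℝ) : ℂ) * z) / (1 + ((ι * δt : ℝ) : ℂ) * z)‖ ≤ 1 := by
  rw [norm_div]
  refine div_le_one_of_le₀ ?_ (norm_nonneg _)
  rw [← sq_le_sq₀ (norm_nonneg _) (norm_nonneg _), Complex.sq_norm, Complex.sq_norm,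
    Complex.normSq_apply, Complex.normSq_apply]
  simp only [Complex.sub_re, Complex.add_re, Complex.sub_im, Complex.add_im, Complex.one_re,
    Complex.one_im, Complex.re_ofReal_mul, Complex.im_ofReal_mul]
  nlinarith [mul_nonneg hδt hz, mul_nonneg (by linarith : (0:ℝ) ≤ 2 * ι - 1)
    (mul_nonneg (sq_nonneg δt) (add_nonneg (sq_nonneg z.re) (sq_nonneg z.im)))]

theorem unconditional_von_neumann_stability_general
    (α₁ α₂ β c₁ c₂ d h k δt ι : ℝ)
    (h1 : α₁ > 0) (h2 : α₂ > 0) (h3 : β ^ 2 < 4 * α₁ * α₂) (hd : d ≥ 0)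
    (hδt : δt > 0) (hι1 : (1:ℝ)/2 ≤ ι) :
    ∀ θx ∈ Set.Ico (0:ℝ) (2 * Real.pi), ∀ θy ∈ Set.Ico (0:ℝ) (2 * Real.pi),
      ‖((1 - ((1 - ι) * δt : ℝ) *
            ((FR α₁ α₂ β h k θx θy + d : ℝ) + (FI c₁ c₂ h k θx θy : ℝ) * Complex.I)) /
          (1 + (ι * δt : ℝ) *
            ((FR α₁ α₂ β h k θx θy + d : ℝ) + (FI c₁ c₂ h k θx θy : ℝ) * Complex.I)))‖ ≤ 1 := by
  intro θx _ θy _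
  refine norm_theta_scheme_factor_le_one hδt.le hι1 ?_
  simpa using add_nonneg (FR_nonneg h1.le h2.le h3.le h k θx θy) hd

theorem unconditional_von_neumann_stability
    (α₁ α₂ β c₁ c₂ d h k δt ι : ℝ)
    (h1 : α₁ > 0) (h2 : α₂ > 0) (h3 : β ^ 2 < 4 * α₁ * α₂) (hd : d ≥ 0)
    (hh : h > 0) (hk : k > 0) (hδt : δt > 0) (hι1 : (1:ℝ)/2 ≤ ι) (hι2 : ι ≤ 1) :
    ∀ θx ∈ Set.Ico (0:ℝ) (2 * Real.pi), ∀ θy ∈ Set.Ico (0:ℝ) (2 * Real.pi),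
      ‖((1 - ((1 - ι) * δt : ℝ) *
            ((FR α₁ α₂ β h k θx θy + d : ℝ) + (FI c₁ c₂ h k θx θy : ℝ) * Complex.I)) /
          (1 + (ι * δt : ℝ) *
            ((FR α₁ α₂ β h k θx θy + d : ℝ) + (FI c₁ c₂ h k θx θy : ℝ) * Complex.I)))‖ ≤ 1 :=
  unconditional_von_neumann_stability_general α₁ α₂ β c₁ c₂ d h k δt ι h1 h2 h3 hd hδt hι1
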